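/- The language {a^n b^n : n ∈ ℕ} is not recognised by any nondeterministic VASS with coverability acceptance, even with ε-transitions, in any dimension. -/

import Mathlib

open scoped Classical

/-- A `k`-dimensional vector addition system with states over alphabet `A`.
States are `Fin n`; transitions are labelled by a letter and an effect in `ℤ^k`. -/
structure VASS (k : ℕ) (A : Type) where
  n : ℕ
  trans : Set (Fin n × A × (Fin k → ℤ) × Fin n)
  init : Fin n
  acc : Set (Fin n)

namespace VASS

variable {k : ℕ} {A : Type}

/-- A configuration: a state together with counters in `ℕ^k`. -/
abbrev Conf (V : VASS k A) := Fin V.n × (Fin k → ℕ)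

/-- `Run V c w c'`: there is a valid run of `V` from configuration `c` to `c'`
reading the word `w`, with counters staying nonnegative throughout. -/
inductive Run (V : VASS k A) : V.Conf → List A → V.Conf → Prop
  | nil (c : V.Conf) : Run V c [] c
  | cons {q : Fin V.n} {v : Fin k → ℕ} {a : A} {d : Fin k → ℤ} {q' : Fin V.n}
      {w : List A} {c' : V.Conf} :
      (q, a, d, q') ∈ V.trans →
      (∀ i, 0 ≤ (v i : ℤ) + d i) →
      Run V (q', fun i => ((v i : ℤ) + d i).toNat) w c' →
      Run V (q, v) (a :: w) c'

/-- The initial configuration: initial state with all counters zero. -/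
def initConf (V : VASS k A) : V.Conf := (V.init, fun _ => 0)

/-- Coverability acceptance: some run ends in an accepting state. -/
def LangCover (V : VASS k A) : Set (List A) :=
  {w | ∃ c, V.Run V.initConf w c ∧ c.1 ∈ V.acc}

/-- Reachability acceptance: some run ends in an accepting state with all counters zero. -/
def LangReach (V : VASS k A) : Set (List A) :=
  {w | ∃ c, V.Run V.initConf w c ∧ c.1 ∈ V.acc ∧ c.2 = fun _ => 0}

/-- Deterministic: at most one outgoing transition per state and letter. -/
def Det (V : VASS k A) : Prop :=
  ∀ q a d₁ q₁ d₂ q₂, (q, a, d₁, q₁) ∈ V.trans → (q, a, d₂, q₂) ∈ V.trans →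
    d₁ = d₂ ∧ q₁ = q₂

/-- A resolver: given the history (the word read so far) and the next letter,
choose the effect and target state of the transition to take. -/
def Resolver (V : VASS k A) := List A → A → (Fin k → ℤ) × Fin V.n

/-- One step of the run built by a resolver (carrying the prefix read so far). -/
noncomputable def resStep (V : VASS k A) (r : V.Resolver) :
    (List A × Option V.Conf) → A → (List A × Option V.Conf) :=
  fun p a =>
    (p.1 ++ [a],
      p.2.bind fun c =>
        let t := r p.1 a
        if (c.1, a, t.1, t.2) ∈ V.trans ∧ ∀ i, 0 ≤ ((c.2 i : ℤ) + t.1 i) then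
          some (t.2, fun i => ((c.2 i : ℤ) + t.1 i).toNat)
        else none)

/-- The configuration reached by following the resolver on `w` (if the run survives). -/
noncomputable def resRun (V : VASS k A) (r : V.Resolver) (w : List A) : Option V.Conf :=
  (w.foldl (V.resStep r) ([], some V.initConf)).2

/-- History-determinism for coverability acceptance:
some resolver's run accepts every word of the language. -/
def HDCover (V : VASS k A) : Prop :=
  ∃ r : V.Resolver, ∀ w ∈ V.LangCover,
    ∃ c, V.resRun r w = some c ∧ c.1 ∈ V.acc

/-- History-determinism for reachability acceptance. -/
def HDReach (V : VASS k A) : Prop :=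
  ∃ r : V.Resolver, ∀ w ∈ V.LangReach,
    ∃ c, V.resRun r w = some c ∧ c.1 ∈ V.acc ∧ c.2 = fun _ => 0

/-- Coverability language of a VASS with ε-transitions (letter `none` is silent):
the input word is the sequence of actual letters read. -/
def LangCoverE (V : VASS k (Option A)) : Set (List A) :=
  {w | ∃ u c, V.Run V.initConf u c ∧ u.reduceOption = w ∧ c.1 ∈ V.acc}

/-- Reachability language of a VASS with ε-transitions. -/
def LangReachE (V : VASS k (Option A)) : Set (List A) :=
  {w | ∃ u c, V.Run V.initConf u c ∧ u.reduceOption = w ∧ c.1 ∈ V.acc ∧ c.2 = fun _ => 0}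

/-- History-determinism with ε-transitions, coverability: a resolver together with a
(prefix-monotone) scheduling of silent moves accepts every word of the language. -/
def HDCoverE (V : VASS k (Option A)) : Prop :=
  ∃ (r : V.Resolver) (f : List A → List (Option A)),
    (∀ u w, u <+: w → f u <+: f w) ∧
    ∀ w ∈ V.LangCoverE, (f w).reduceOption = w ∧
      ∃ c, V.resRun r (f w) = some c ∧ c.1 ∈ V.acc

/-- History-determinism with ε-transitions, reachability. -/
def HDReachE (V : VASS k (Option A)) : Prop :=
  ∃ (r : V.Resolver) (f : List A → List (Option A)),
    (∀ u w, u <+: w → f u <+: f w) ∧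
    ∀ w ∈ V.LangReachE, (f w).reduceOption = w ∧
      ∃ c, V.resRun r (f w) = some c ∧ c.1 ∈ V.acc ∧ c.2 = fun _ => 0

end VASS

inductive AB | a | b
deriving DecidableEq

open AB List

/-- The language `a^n b^n`. -/
def Lab : Set (List AB) := {w | ∃ n, w = replicate n a ++ replicate n b}

section Aux

variable {k : ℕ} {A : Type}

lemma run_append {V : VASS k A} {c c' c'' : V.Conf} {u v : List A}
    (h1 : V.Run c u c') (h2 : V.Run c' v c'') : V.Run c (u ++ v) c'' := by
  induction h1 with
  | nil c => exact h2
  | cons ht hn _ ih => exact VASS.Run.cons ht hn (ih h2)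

lemma run_split {V : VASS k A} {c c'' : V.Conf} {u v : List A}
    (h : V.Run c (u ++ v) c'') : ∃ c', V.Run c u c' ∧ V.Run c' v c'' := by
  induction u generalizing c with
  | nil => exact ⟨c, VASS.Run.nil c, h⟩
  | cons x t ih =>
    cases h with
    | cons ht hn hr =>
      obtain ⟨c', h1, h2⟩ := ih hr
      exact ⟨c', VASS.Run.cons ht hn h1, h2⟩

lemma run_mono {V : VASS k A} {c0 : V.Conf} {w : List A} {c : V.Conf}
    (h : V.Run c0 w c) (v2 : Fin k → ℕ) (hle : ∀ i, c0.2 i ≤ v2 i) :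
    ∃ v2', V.Run (c0.1, v2) w (c.1, v2') ∧ ∀ i, c.2 i ≤ v2' i := by
  induction h generalizing v2 with
  | nil c => exact ⟨v2, VASS.Run.nil _, hle⟩
  | @cons q v a d q' w c' ht hn hr ih =>
    have hn2 : ∀ i, 0 ≤ (v2 i : ℤ) + d i := fun i =>
      le_trans (hn i) (add_le_add_left (by exact_mod_cast hle i) _)
    have hle' : ∀ i, ((v i : ℤ) + d i).toNat ≤ ((v2 i : ℤ) + d i).toNat := fun i =>
      Int.toNat_le_toNat (add_le_add_left (by exact_mod_cast hle i) _)
    obtain ⟨v2', hr2, hfin⟩ := ih (fun i => ((v2 i : ℤ) + d i).toNat) hle'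
    exact ⟨v2', VASS.Run.cons ht hn2 hr2, hfin⟩

lemma reduceOption_split {α : Type _} : ∀ (u : List (Option α)) (x y : List α),
    u.reduceOption = x ++ y →
    ∃ p s, u = p ++ s ∧ p.reduceOption = x ∧ s.reduceOption = y := by
  intro u
  induction u with
  | nil =>
    intro x y h
    simp only [List.reduceOption_nil] at h
    obtain ⟨hx, hy⟩ := List.append_eq_nil_iff.mp h.symm
    exact ⟨[], [], by simp, by simp [hx], by simp [hy]⟩
  | cons o t ih =>
    intro x y h
    cases o with
    | none =>
      simp only [List.reduceOption_cons_of_none] at h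
      obtain ⟨p, s, hu, hp, hs⟩ := ih x y h
      exact ⟨none :: p, s, by simp [hu], by simp [hp], hs⟩
    | some a =>
      simp only [List.reduceOption_cons_of_some] at h
      cases x with
      | nil =>
        exact ⟨[], some a :: t, by simp, by simp, by simpa using h⟩
      | cons b x' =>
        simp only [List.cons_append, List.cons.injEq] at h
        obtain ⟨rfl, h2⟩ := h
        obtain ⟨p, s, hu, hp, hs⟩ := ih x' y h2
        exact ⟨some a :: p, s, by simp [hu], by simp [hp], hs⟩

lemma reduceOption_map_some {α : Type _} (w : List α) :
    (w.map some).reduceOption = w := by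
  induction w with
  | nil => simp
  | cons a t ih => simp [ih]

/-- Pumping lemma for coverability languages of ε-VASS containing all `a^n b^n`. -/
lemma vass_pump {k : ℕ} (V : VASS k (Option AB))
    (h : ∀ n, replicate n a ++ replicate n b ∈ V.LangCoverE) :
    ∃ m n, m < n ∧ replicate n a ++ replicate m b ∈ V.LangCoverE := by
  choose u c hrun hred hacc using h
  have hsplit : ∀ n, ∃ p s, ∃ d : V.Conf, p.reduceOption = replicate n a ∧
      s.reduceOption = replicate n b ∧ V.Run V.initConf p d ∧ V.Run d s (c n) := by
    intro n
    obtain ⟨p, s, hu, hp, hs⟩ := reduceOption_split (u n) _ _ (hred n)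
    obtain ⟨d, h1, h2⟩ := run_split (hu ▸ hrun n)
    exact ⟨p, s, d, hp, hs, h1, h2⟩
  choose p s d hp hs h1 h2 using hsplit
  obtain ⟨q, hq⟩ := Finite.exists_infinite_fiber (fun n => (d n).1)
  have hS : {n | (d n).1 = q}.Infinite := by
    have h' := (Set.infinite_coe_iff (s := (fun n => (d n).1) ⁻¹' {q})).mp hq
    exact h'
  let g : ℕ → ℕ := Nat.nth (fun n => (d n).1 = q)
  have hmem : ∀ i, (d (g i)).1 = q := fun i => Nat.nth_mem_of_infinite hS i
  have hmono : StrictMono g := Nat.nth_strictMono hS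
  have hpwo : (Set.univ : Set (Fin k → ℕ)).IsPWO :=
    Set.isPWO_of_wellQuasiOrderedLE _
  obtain ⟨i, j, hij, hle⟩ := Set.PartiallyWellOrderedOn.exists_lt hpwo (f := fun i => (d (g i)).2) (fun _ => Set.mem_univ _)
  set m := g i
  set n := g j
  have hmn : m < n := hmono hij
  have hle2 : ∀ t, (d m).2 t ≤ (d n).2 t := fun t => hle t
  obtain ⟨v2', hr2, _⟩ := run_mono (h2 m) ((d n).2) hle2
  have hdm : ((d m).1, (d n).2) = d n := by
    rw [hmem i, ← hmem j]
  rw [hdm] at hr2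
  refine ⟨m, n, hmn, p n ++ s m, ((c m).1, v2'),
    run_append (h1 n) hr2, ?_, hacc m⟩
  rw [List.reduceOption_append, hp, hs]

/-- Lift a VASS over `AB` to one over `Option AB` with no ε-transitions. -/
def liftV {k : ℕ} (V : VASS k AB) : VASS k (Option AB) :=
  ⟨V.n, {t | ∃ q x dd q', t = (q, some x, dd, q') ∧ (q, x, dd, q') ∈ V.trans},
    V.init, V.acc⟩

lemma lift_run_of {k : ℕ} {V : VASS k AB} {c c' : V.Conf} {w : List AB}
    (h : V.Run c w c') : (liftV V).Run c (w.map some) c' := by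
  induction h with
  | nil c => exact VASS.Run.nil (V := liftV V) c
  | @cons q v x dd q' w c' ht hn _ ih =>
    exact VASS.Run.cons (show _ ∈ (liftV V).trans from ⟨q, x, dd, q', rfl, ht⟩) hn ih

lemma run_of_lift {k : ℕ} {V : VASS k AB} {c c' : (liftV V).Conf} {u : List (Option AB)}
    (h : (liftV V).Run c u c') : V.Run c u.reduceOption c' := by
  induction h with
  | nil c => exact VASS.Run.nil (V := V) c
  | @cons q v x dd q' w c' ht hn _ ih =>
    obtain ⟨q1, x1, dd1, q1', heq, ht'⟩ := ht
    cases heq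
    simp only [List.reduceOption_cons_of_some]
    exact VASS.Run.cons ht' hn ih

lemma ab_counts {m n p : ℕ}
    (h : replicate n a ++ replicate m b = replicate p a ++ replicate p b) :
    n = p ∧ m = p := by
  have hab : (a : AB) ≠ b := by decide
  have h1 := congrArg (List.count a) h
  have h2 := congrArg (List.count b) h
  simp [List.count_append, List.count_replicate, hab, hab.symm] at h1 h2
  exact ⟨h1, h2⟩

end Aux

/-- `a^n b^n` is not recognised by any nondeterministic VASS with coverability
acceptance, even with ε-transitions, in any dimension. -/
theorem stmt7 :
    (¬ ∃ (k : ℕ) (V : VASS k AB), V.LangCover = Lab) ∧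
    (¬ ∃ (k : ℕ) (V : VASS k (Option AB)), V.LangCoverE = Lab) := by
  constructor
  · rintro ⟨k, V, hV⟩
    have h : ∀ n, replicate n a ++ replicate n b ∈ (liftV V).LangCoverE := by
      intro n
      have hw : replicate n a ++ replicate n b ∈ V.LangCover := by
        rw [hV]; exact ⟨n, rfl⟩
      obtain ⟨c, hr, ha⟩ := hw
      exact ⟨(replicate n a ++ replicate n b).map some, c, lift_run_of hr,
        reduceOption_map_some _, ha⟩
    obtain ⟨m, n, hmn, hw⟩ := vass_pump (liftV V) h
    obtain ⟨u, c, hr, hred, ha⟩ := hw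
    have : replicate n a ++ replicate m b ∈ V.LangCover :=
      ⟨c, hred ▸ run_of_lift hr, ha⟩
    rw [hV] at this
    obtain ⟨p, hp⟩ := this
    obtain ⟨h1, h2⟩ := ab_counts hp
    omega
  · rintro ⟨k, V, hV⟩
    have h : ∀ n, replicate n a ++ replicate n b ∈ V.LangCoverE := by
      intro n; rw [hV]; exact ⟨n, rfl⟩
    obtain ⟨m, n, hmn, hw⟩ := vass_pump V h
    rw [hV] at hw
    obtain ⟨p, hp⟩ := hw
    obtain ⟨h1, h2⟩ := ab_counts hp
    omega
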